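/- Let 0 < ζ < 1 and 0 < ζ̂ < 1, let {(X_r, Y_r)} ⊂ S^m_{++} × S^m_{++}, {(ΔX_r, ΔY_r)} ⊂ S^m × S^m, and let {μ_r}, {μ̂_r} be positive sequences with μ_r → 0 and μ̂_r → 0. Suppose there is C > 0 such that for all r: ‖ΔX_r∘ΔY_r‖_F ≤ C·μ_r², ‖X_r∘Y_r − μ_r I‖_F ≤ C·μ_r^{1+ζ}, and ‖Z_r − μ̂_r I‖_F ≤ C·μ̂_r^{1+ζ̂}, where Z_r := X_r∘Y_r + X_r∘ΔY_r + Y_r∘ΔX_r; suppose further μ_r²/μ̂_r → 0. Then for all sufficiently large r, X_r + ΔX_r ∈ S^m_{++} and Y_r + ΔY_r ∈ S^m_{++}. -/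

import Mathlib

/-!
Along the segment `X(t) = X + tΔX`, `Y(t) = Y + tΔY`, `t ∈ [0,1]`, one has
`X(t)∘Y(t) - ν(t)I = (1-t)P + tQ + t²R` with `ν(t) = (1-t)μ + tμ̂`, where `P`, `Q`, `R` are the
three residuals bounded in the hypotheses. For large `r` these bounds give `‖P‖_F < μ` and
`‖Q‖_F + ‖R‖_F < μ̂` (the latter because `μ²/μ̂ → 0`), hence `‖X(t)∘Y(t) - ν(t)I‖_F < ν(t)`, so
`X(t)∘Y(t)` is positive definite. A kernel vector of `X(t)` or `Y(t)` would make its quadratic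
form vanish, so `X(t)` and `Y(t)` stay nonsingular on `[0,1]`. Positive definiteness is open,
and a positive semidefinite limit that is nonsingular is positive definite, so the set of `t`
with `X(t)` positive definite is clopen in `[0,1]` and contains `1`; likewise for `Y(t)`.
-/

open Filter Topology

noncomputable def jordan {ι : Type*} [Fintype ι] (X Y : Matrix ι ι ℝ) : Matrix ι ι ℝ :=
  (2:ℝ)⁻¹ • (X * Y + Y * X)

noncomputable def frobNorm {ι : Type*} [Fintype ι] (A : Matrix ι ι ℝ) : ℝ :=
  Real.sqrt (∑ i, ∑ j, (A i j) ^ 2)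

open Matrix

section Jordan

variable {n : Type*} [Fintype n]

lemma jordan_comm (X Y : Matrix n n ℝ) : jordan X Y = jordan Y X := by
  rw [jordan, jordan, add_comm]

lemma Matrix.IsSymm.jordan {X Y : Matrix n n ℝ} (hX : X.IsSymm) (hY : Y.IsSymm) :
    (jordan X Y).IsSymm := by
  simp only [_root_.jordan, IsSymm, transpose_smul, transpose_add, transpose_mul, hX.eq, hY.eq,
    add_comm]

lemma jordan_add_smul_add_smul (X Y A B : Matrix n n ℝ) (t : ℝ) :
    jordan (X + t • A) (Y + t • B) =
      jordan X Y + t • (jordan X B + jordan Y A) + t ^ 2 • jordan A B := by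
  simp only [jordan, Matrix.add_mul, Matrix.mul_add, Matrix.smul_mul, Matrix.mul_smul, smul_add]
  module

end Jordan

section Frobenius

attribute [local instance] Matrix.frobeniusNormedAddCommGroup Matrix.frobeniusNormedSpace

variable {n : Type*} [Fintype n]

lemma frobNorm_eq_norm (A : Matrix n n ℝ) : frobNorm A = ‖A‖ := by
  simp [frobNorm, frobenius_norm_def, Real.sqrt_eq_rpow]

/- `v ⬝ᵥ B *ᵥ v` is the only entry of the `1 × 1` matrix `row v * B * col v`, so
submultiplicativity of the Frobenius norm bounds it. -/
lemma abs_dotProduct_mulVec_le (B : Matrix n n ℝ) (v : n → ℝ) :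
    |v ⬝ᵥ (B *ᵥ v)| ≤ frobNorm B * (v ⬝ᵥ v) := by
  have hprod : replicateRow Unit v * B * replicateCol Unit v = of fun _ _ => v ⬝ᵥ (B *ᵥ v) := by
    ext
    simp only [Matrix.mul_apply, replicateRow_apply, replicateCol_apply, of_apply, dotProduct,
      mulVec, Finset.mul_sum, Finset.sum_mul]
    exact Finset.sum_comm.trans (by simp only [mul_assoc, mul_left_comm])
  have hentry : ‖(of fun _ _ => v ⬝ᵥ (B *ᵥ v) : Matrix Unit Unit ℝ)‖ = |v ⬝ᵥ (B *ᵥ v)| := by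
    rw [frobenius_norm_def, ← Real.sqrt_eq_rpow]
    simp [Real.sqrt_sq_eq_abs]
  have hnorm : ‖WithLp.toLp 2 v‖ ^ 2 = v ⬝ᵥ v := by
    rw [EuclideanSpace.norm_sq_eq]
    simp [dotProduct, sq]
  calc |v ⬝ᵥ (B *ᵥ v)| = ‖replicateRow Unit v * B * replicateCol Unit v‖ := by
        rw [hprod, hentry]
    _ ≤ ‖replicateRow Unit v‖ * ‖B‖ * ‖replicateCol Unit v‖ :=
        (frobenius_norm_mul _ _).trans (by gcongr; exact frobenius_norm_mul _ _)
    _ = frobNorm B * (v ⬝ᵥ v) := by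
        rw [frobenius_norm_replicateRow, frobenius_norm_replicateCol, frobNorm_eq_norm, ← hnorm]
        ring

lemma frobNorm_jordan_add_smul_sub_lt [DecidableEq n] {X Y ΔX ΔY : Matrix n n ℝ} {μ μh : ℝ}
    (hP : frobNorm (jordan X Y - μ • 1) < μ)
    (hQR : frobNorm (jordan ΔX ΔY) +
      frobNorm (jordan X Y + jordan X ΔY + jordan Y ΔX - μh • 1) < μh)
    {t : ℝ} (ht : t ∈ Set.Icc (0 : ℝ) 1) :
    frobNorm (jordan (X + t • ΔX) (Y + t • ΔY) - ((1 - t) * μ + t * μh) • 1) <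
      (1 - t) * μ + t * μh := by
  obtain ⟨ht0, ht1⟩ := ht
  set P := jordan X Y - μ • (1 : Matrix n n ℝ)
  set Q := jordan X Y + jordan X ΔY + jordan Y ΔX - μh • (1 : Matrix n n ℝ)
  set R := jordan ΔX ΔY
  have hsplit : jordan (X + t • ΔX) (Y + t • ΔY) - ((1 - t) * μ + t * μh) • 1 =
      (1 - t) • P + t • Q + t ^ 2 • R := by
    rw [jordan_add_smul_add_smul]
    simp only [P, Q, R]
    module
  have htri : ‖(1 - t) • P + t • Q + t ^ 2 • R‖ ≤ (1 - t) * ‖P‖ + t * ‖Q‖ + t ^ 2 * ‖R‖ := by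
    refine norm_add₃_le.trans_eq ?_
    rw [norm_smul, norm_smul, norm_smul, Real.norm_of_nonneg (sub_nonneg.2 ht1),
      Real.norm_of_nonneg ht0, Real.norm_of_nonneg (sq_nonneg t)]
  have hR : t ^ 2 * ‖R‖ ≤ t * ‖R‖ := mul_le_mul_of_nonneg_right (by nlinarith) (norm_nonneg R)
  simp only [frobNorm_eq_norm] at hP hQR ⊢
  have hconv : 0 < (1 - t) * (μ - ‖P‖) + t * (μh - ‖Q‖ - ‖R‖) := by
    rcases ht1.lt_or_eq with ht1 | rfl
    · exact add_pos_of_pos_of_nonneg (mul_pos (sub_pos.2 ht1) (sub_pos.2 hP))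
        (mul_nonneg ht0 (by linarith))
    · linarith
  rw [hsplit]
  linarith

end Frobenius

section PosDef

variable {n : Type*} [Fintype n]

lemma posDef_of_frobNorm_sub_smul_one_lt [DecidableEq n] {M : Matrix n n ℝ} (hM : M.IsHermitian)
    {ν : ℝ} (h : frobNorm (M - ν • 1) < ν) : M.PosDef := by
  refine .of_dotProduct_mulVec_pos hM fun v hv => ?_
  have hvv : 0 < v ⬝ᵥ v := by simpa using dotProduct_star_self_pos_iff.2 hv
  have hsplit : v ⬝ᵥ (M *ᵥ v) = ν * (v ⬝ᵥ v) + v ⬝ᵥ ((M - ν • 1) *ᵥ v) := by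
    simp [sub_mulVec, smul_mulVec, dotProduct_sub]
  have hpert := abs_le.1 (abs_dotProduct_mulVec_le (M - ν • 1) v)
  rw [star_trivial, hsplit]
  nlinarith

lemma eq_zero_of_mulVec_eq_zero_of_posDef_jordan {X Y : Matrix n n ℝ} (hX : X.IsSymm)
    (h : (jordan X Y).PosDef) {v : n → ℝ} (hv : X *ᵥ v = 0) : v = 0 := by
  by_contra hne
  have hpos := h.dotProduct_mulVec_pos hne
  have hXY : v ⬝ᵥ (X *ᵥ (Y *ᵥ v)) = 0 := by
    rw [dotProduct_mulVec, ← mulVec_transpose, hX.eq, hv, zero_dotProduct]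
  simp [jordan, add_mulVec, smul_mulVec, ← mulVec_mulVec, hv, hXY] at hpos

lemma posDef_of_pos_on_unit_sphere {M : Matrix n n ℝ} (hM : M.IsHermitian)
    (h : ∀ w ∈ Metric.sphere (0 : n → ℝ) 1, 0 < w ⬝ᵥ (M *ᵥ w)) : M.PosDef := by
  refine .of_dotProduct_mulVec_pos hM fun v hv => ?_
  have hv' : 0 < ‖v‖ := norm_pos_iff.2 hv
  have hw := h (‖v‖⁻¹ • v) (by simp [norm_smul, hv'.ne'])
  simp only [mulVec_smul, dotProduct_smul, smul_dotProduct, smul_eq_mul] at hw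
  rw [star_trivial]
  exact pos_of_mul_pos_right (pos_of_mul_pos_right hw (by positivity)) (by positivity)

lemma isOpen_setOf_posDef_add_smul {A D : Matrix n n ℝ} (hA : A.IsHermitian)
    (hD : D.IsHermitian) : IsOpen {t : ℝ | (A + t • D).PosDef} := by
  refine isOpen_iff_mem_nhds.2 fun t ht => ?_
  have hq : Continuous fun p : ℝ × (n → ℝ) => p.2 ⬝ᵥ ((A + p.1 • D) *ᵥ p.2) := by fun_prop
  have hsphere : ∀ᶠ s in 𝓝 t, ∀ w ∈ Metric.sphere (0 : n → ℝ) 1,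
      0 < w ⬝ᵥ ((A + s • D) *ᵥ w) :=
    (isCompact_sphere 0 1).eventually_forall_of_forall_eventually fun w hw =>
      continuousAt_const.eventually_lt hq.continuousAt
        (by simpa using ht.dotProduct_mulVec_pos (ne_zero_of_mem_sphere one_ne_zero ⟨w, hw⟩))
  filter_upwards [hsphere] with s hs
  exact posDef_of_pos_on_unit_sphere (hA.add (hD.smul (IsSelfAdjoint.all s))) hs

theorem Matrix.PosDef.add_of_forall_mulVec_eq_zero {A D : Matrix n n ℝ} (hA : A.PosDef)
    (hD : D.IsHermitian) (hker : ∀ t ∈ Set.Icc (0 : ℝ) 1, ∀ v, (A + t • D) *ᵥ v = 0 → v = 0) :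
    (A + D).PosDef := by
  have hherm (t : ℝ) : (A + t • D).IsHermitian := hA.1.add (hD.smul (IsSelfAdjoint.all t))
  have hclosed : IsClosed {t : ℝ | ∀ v, 0 ≤ v ⬝ᵥ ((A + t • D) *ᵥ v)} := by
    simp only [Set.ofPred_forall]
    exact isClosed_iInter fun v => isClosed_le continuous_const (by fun_prop)
  have hsub := isPreconnected_Icc.subset_of_closure_inter_subset
    (isOpen_setOf_posDef_add_smul hA.1 hD) ⟨0, ⟨le_rfl, zero_le_one⟩, by simpa using hA⟩ ?_
  · simpa using hsub ⟨zero_le_one, le_rfl⟩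
  rintro t ⟨hcl, hI⟩
  have hnonneg : ∀ v, 0 ≤ v ⬝ᵥ ((A + t • D) *ᵥ v) :=
    closure_minimal (fun s hs v => by simpa using hs.posSemidef.dotProduct_mulVec_nonneg v)
      hclosed hcl
  have hpsd : (A + t • D).PosSemidef :=
    .of_dotProduct_mulVec_nonneg (hherm t) (by simpa using hnonneg)
  refine .of_dotProduct_mulVec_pos (hherm t) fun v hv =>
    (hpsd.dotProduct_mulVec_nonneg v).lt_of_ne fun h => hv ?_
  exact hker t hI v ((hpsd.dotProduct_mulVec_zero_iff v).1 h.symm)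

end PosDef

theorem posDef_add_of_frobNorm_jordan_lt {n : Type*} [Fintype n] [DecidableEq n]
    {X Y ΔX ΔY : Matrix n n ℝ} (hX : X.PosDef) (hY : Y.PosDef) (hΔX : ΔX.IsSymm)
    (hΔY : ΔY.IsSymm) {μ μh : ℝ} (hP : frobNorm (jordan X Y - μ • 1) < μ)
    (hQR : frobNorm (jordan ΔX ΔY) +
      frobNorm (jordan X Y + jordan X ΔY + jordan Y ΔX - μh • 1) < μh) :
    (X + ΔX).PosDef ∧ (Y + ΔY).PosDef := by
  have hXs : X.IsSymm := isHermitian_iff_isSymm.1 hX.1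
  have hYs : Y.IsSymm := isHermitian_iff_isSymm.1 hY.1
  have hjordan : ∀ t ∈ Set.Icc (0 : ℝ) 1, (jordan (X + t • ΔX) (Y + t • ΔY)).PosDef :=
    fun t ht => posDef_of_frobNorm_sub_smul_one_lt
      (isHermitian_iff_isSymm.2 ((hXs.add (hΔX.smul t)).jordan (hYs.add (hΔY.smul t))))
      (frobNorm_jordan_add_smul_sub_lt hP hQR ht)
  constructor
  · refine hX.add_of_forall_mulVec_eq_zero (isHermitian_iff_isSymm.2 hΔX) fun t ht v hv => ?_
    exact eq_zero_of_mulVec_eq_zero_of_posDef_jordan (hXs.add (hΔX.smul t)) (hjordan t ht) hv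
  · refine hY.add_of_forall_mulVec_eq_zero (isHermitian_iff_isSymm.2 hΔY) fun t ht v hv => ?_
    exact eq_zero_of_mulVec_eq_zero_of_posDef_jordan (hYs.add (hΔY.smul t))
      (jordan_comm (X + t • ΔX) _ ▸ hjordan t ht) hv

lemma eventually_const_mul_lt_mul_of_tendsto_div {α : Type*} {l : Filter α} {f g : α → ℝ}
    (hfg : Tendsto (fun r => f r / g r) l (𝓝 0)) (hg : ∀ r, 0 < g r) (C : ℝ) {ε : ℝ}
    (hε : 0 < ε) : ∀ᶠ r in l, C * f r < ε * g r := by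
  have hC : Tendsto (fun r => C * (f r / g r)) l (𝓝 0) := by simpa using hfg.const_mul C
  filter_upwards [hC.eventually_lt_const hε] with r hr
  rwa [mul_div_assoc', div_lt_iff₀ (hg r)] at hr

lemma tendsto_rpow_one_add_div_self {α : Type*} {l : Filter α} {μ : α → ℝ}
    (hμ : Tendsto μ l (𝓝 0)) (hpos : ∀ r, 0 < μ r) {ζ : ℝ} (hζ : 0 < ζ) :
    Tendsto (fun r => μ r ^ (1 + ζ) / μ r) l (𝓝 0) := by
  refine (hμ.rpow_const_nhds_zero hζ).congr fun r => ?_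
  rw [Real.rpow_add (hpos r), Real.rpow_one, mul_div_cancel_left₀ _ (hpos r).ne']

theorem step_preserves_posdef_general {m : ℕ} (ζ ζh : ℝ)
    (hζ0 : 0 < ζ) (hζh0 : 0 < ζh)
    (X Y ΔX ΔY : ℕ → Matrix (Fin m) (Fin m) ℝ)
    (hX : ∀ r, (X r).PosDef) (hY : ∀ r, (Y r).PosDef)
    (hΔX : ∀ r, (ΔX r).IsSymm) (hΔY : ∀ r, (ΔY r).IsSymm)
    (μ μh : ℕ → ℝ) (hμpos : ∀ r, 0 < μ r) (hμhpos : ∀ r, 0 < μh r)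
    (hμ0 : Tendsto μ atTop (𝓝 0)) (hμh0 : Tendsto μh atTop (𝓝 0))
    (C : ℝ)
    (h1 : ∀ r, frobNorm (jordan (ΔX r) (ΔY r)) ≤ C * μ r ^ 2)
    (h2 : ∀ r, frobNorm (jordan (X r) (Y r) - μ r • (1 : Matrix (Fin m) (Fin m) ℝ))
        ≤ C * μ r ^ (1 + ζ))
    (h3 : ∀ r, frobNorm (jordan (X r) (Y r) + jordan (X r) (ΔY r) + jordan (Y r) (ΔX r)
        - μh r • (1 : Matrix (Fin m) (Fin m) ℝ)) ≤ C * μh r ^ (1 + ζh))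
    (h4 : Tendsto (fun r => μ r ^ 2 / μh r) atTop (𝓝 0)) :
    ∀ᶠ r in atTop, (X r + ΔX r).PosDef ∧ (Y r + ΔY r).PosDef := by
  filter_upwards [eventually_const_mul_lt_mul_of_tendsto_div
      (tendsto_rpow_one_add_div_self hμ0 hμpos hζ0) hμpos C one_pos,
    eventually_const_mul_lt_mul_of_tendsto_div
      (tendsto_rpow_one_add_div_self hμh0 hμhpos hζh0) hμhpos C (half_pos one_pos),
    eventually_const_mul_lt_mul_of_tendsto_div h4 hμhpos C (half_pos one_pos)]
    with r hP hQ hR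
  exact posDef_add_of_frobNorm_jordan_lt (μh := μh r) (hX r) (hY r) (hΔX r) (hΔY r)
    ((h2 r).trans_lt (by linarith)) (by linarith [h1 r, h3 r])

/-- eventual positive definiteness of X_r + ΔX_r and Y_r + ΔY_r under
the stated centrality and step-size conditions. -/
theorem step_preserves_posdef {m : ℕ} (ζ ζh : ℝ)
    (hζ0 : 0 < ζ) (hζ1 : ζ < 1) (hζh0 : 0 < ζh) (hζh1 : ζh < 1)
    (X Y ΔX ΔY : ℕ → Matrix (Fin m) (Fin m) ℝ)
    (hX : ∀ r, (X r).PosDef) (hY : ∀ r, (Y r).PosDef)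
    (hΔX : ∀ r, (ΔX r).IsSymm) (hΔY : ∀ r, (ΔY r).IsSymm)
    (μ μh : ℕ → ℝ) (hμpos : ∀ r, 0 < μ r) (hμhpos : ∀ r, 0 < μh r)
    (hμ0 : Tendsto μ atTop (𝓝 0)) (hμh0 : Tendsto μh atTop (𝓝 0))
    (C : ℝ) (hC : 0 < C)
    (h1 : ∀ r, frobNorm (jordan (ΔX r) (ΔY r)) ≤ C * μ r ^ 2)
    (h2 : ∀ r, frobNorm (jordan (X r) (Y r) - μ r • (1 : Matrix (Fin m) (Fin m) ℝ))
        ≤ C * μ r ^ (1 + ζ))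
    (h3 : ∀ r, frobNorm (jordan (X r) (Y r) + jordan (X r) (ΔY r) + jordan (Y r) (ΔX r)
        - μh r • (1 : Matrix (Fin m) (Fin m) ℝ)) ≤ C * μh r ^ (1 + ζh))
    (h4 : Tendsto (fun r => μ r ^ 2 / μh r) atTop (𝓝 0)) :
    ∀ᶠ r in atTop, (X r + ΔX r).PosDef ∧ (Y r + ΔY r).PosDef :=
  step_preserves_posdef_general ζ ζh hζ0 hζh0 X Y ΔX ΔY hX hY hΔX hΔY μ μh hμpos hμhpos hμ0 hμh0 C
    h1 h2 h3 h4
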